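/- Let Λ ≤ Γ be a finite index subgroup, A a finite abelian group, and α ∈ H^2(Γ, A) the class of a central extension 1 → A → Γ̃ → Γ → 1. If Γ is residually finite and Γ̃ is not residually finite, then the image θ^{Γ/Λ}_*(α) ∈ H^2(Γ, P^{Γ/Λ}(A)) is nonzero. -/

import Mathlib

/-- `f : G × G → M` is an inhomogeneous 2-cocycle for the action `ρ`. -/
def Is2Cocycle {G M : Type} [Group G] [AddCommGroup M] (ρ : G → M →+ M)
    (f : G → G → M) : Prop :=
  ∀ g h k : G, ρ g (f h k) - f (g * h) k + f g (h * k) - f g h = 0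

/-- `f : G × G → M` is an inhomogeneous 2-coboundary for the action `ρ`. -/
def Is2Cobound {G M : Type} [Group G] [AddCommGroup M] (ρ : G → M →+ M)
    (f : G → G → M) : Prop :=
  ∃ b : G → M, ∀ g h : G, f g h = ρ g (b h) - b (g * h) + b g

/-- A group is residually finite if every nontrivial element survives in some
finite quotient. -/
def ResFin (G : Type) [Group G] : Prop :=
  ∀ g : G, g ≠ 1 → ∃ N : Subgroup G, N.Normal ∧ N.FiniteIndex ∧ g ∉ N

/-- `IsCentralExtData φ ι s α` records that `1 → A → Γ̃ → Γ → 1` is a central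
extension of `Γ` by the abelian group `A` (with quotient map `φ` and central
injection `ι`), together with a set-theoretic section `s` of `φ` whose
associated inhomogeneous 2-cocycle is `α`; thus `α ∈ H^2(Γ, A)` classifies the
extension. -/
structure IsCentralExtData {Γ Γt A : Type} [Group Γ] [Group Γt] [AddCommGroup A]
    (φ : Γt →* Γ) (ι : A → Γt) (s : Γ → Γt) (α : Γ → Γ → A) : Prop where
  surj : Function.Surjective φ
  inj : Function.Injective ι
  hom : ∀ a b : A, ι (a + b) = ι a * ι b
  range_eq_ker : ∀ x : Γt, φ x = 1 ↔ ∃ a : A, ι a = x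
  central : ∀ (a : A) (x : Γt), ι a * x = x * ι a
  section_prop : ∀ g : Γ, φ (s g) = g
  cocycle_eq : ∀ g h : Γ, ι (α g h) = s g * s h * (s (g * h))⁻¹

/-- The coinduced module `P^{Γ/Λ}(A) ≅ map(Γ/Λ, A)` with the translation
action of `Γ`. -/
def rhoCoind {Γ : Type} [Group Γ] (Λ : Subgroup Γ) (A : Type) [AddCommGroup A] :
    Γ → ((Γ ⧸ Λ) → A) →+ ((Γ ⧸ Λ) → A) := fun g =>
  { toFun := fun f w => f (g⁻¹ • w)
    map_zero' := rfl
    map_add' := fun _ _ => rfl }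

/-! If `θ_*(α)` were a coboundary `δb`, evaluating `b` at the trivial coset (Shapiro's lemma)
would exhibit `α|_Λ` as a coboundary, and correcting the section `s` by it gives a
homomorphic splitting `σ : Λ → Γ̃` over the preimage `Λ̃` of `Λ`. Since `Λ̃ = σ(Λ) · ι(A)` with
`ι(A)` finite and normal, `σ(Λ)` has finite index in `Γ̃`, and it meets `ker φ` trivially.
Nontrivial elements of `ker φ` are therefore detected by the normal core of `σ(Λ)`, all others
by pulling back finite quotients of the residually finite group `Γ`. -/

namespace Subgroup

variable {G : Type*} [Group G]

theorem finiteIndex_comap {H : Type*} [Group H] (f : G →* H) (N : Subgroup H) [N.FiniteIndex] :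
    (N.comap f).FiniteIndex :=
  ⟨by rw [index_comap]; exact N.isFiniteRelIndex_of_finiteIndex.relIndex_ne_zero⟩

theorem finiteIndex_of_le_sup_of_finite {H N L : Subgroup G} [N.Normal] [Finite N]
    [L.FiniteIndex] (hL : L ≤ H ⊔ N) : H.FiniteIndex := by
  have : (H ⊔ N).FiniteIndex := finiteIndex_of_le hL
  have hrel : H.relIndex (H ⊔ N) ≠ 0 := by
    have hsurj : Function.Surjective fun z : N =>
        ((⟨z, mem_sup_right z.2⟩ : ↥(H ⊔ N)) : ↥(H ⊔ N) ⧸ H.subgroupOf (H ⊔ N)) := by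
      rintro ⟨x, hx⟩
      obtain ⟨z, hz, y, hy, rfl⟩ := mem_sup_of_normal_left.mp (sup_comm H N ▸ hx)
      refine ⟨⟨z, hz⟩, QuotientGroup.eq.mpr ?_⟩
      simpa [mem_subgroupOf] using hy
    have := Finite.of_surjective _ hsurj
    exact index_ne_zero_of_finite
  exact ⟨by
    rw [← relIndex_mul_index (le_sup_left : H ≤ H ⊔ N)]
    exact mul_ne_zero hrel FiniteIndex.index_ne_zero⟩

end Subgroup

theorem ResFin.of_disjoint_ker {G H : Type} [Group G] [Group H] (f : G →* H)
    (hH : ResFin H) (K : Subgroup G) [K.FiniteIndex] (hK : Disjoint K f.ker) :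
    ResFin G := by
  intro x hx
  by_cases hfx : f x = 1
  · exact ⟨K.normalCore, inferInstance, inferInstance,
      fun hxK => hx (Subgroup.disjoint_def.mp hK (K.normalCore_le hxK) hfx)⟩
  · obtain ⟨N, hN, hNfin, hxN⟩ := hH (f x) hfx
    exact ⟨N.comap f, hN.comap f, Subgroup.finiteIndex_comap f N, hxN⟩

theorem Is2Cobound.restrict_of_rhoCoind {Γ A : Type} [Group Γ] [AddCommGroup A]
    (Λ : Subgroup Γ) (α : Γ → Γ → A)
    (h : Is2Cobound (rhoCoind Λ A) fun g h => fun _ : Γ ⧸ Λ => α g h) :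
    Is2Cobound (fun _ : Λ => AddMonoidHom.id A) fun g h : Λ => α g h := by
  obtain ⟨b, hb⟩ := h
  refine ⟨fun g => b g (1 : Γ), fun g h => ?_⟩
  have hfix : (g : Γ)⁻¹ • ((1 : Γ) : Γ ⧸ Λ) = (1 : Γ) := by
    rw [MulAction.Quotient.smul_mk, QuotientGroup.eq]
    simp
  simpa [rhoCoind, hfix] using congrFun (hb g h) ((1 : Γ) : Γ ⧸ Λ)

namespace IsCentralExtData

variable {Γ Γt A : Type} [Group Γ] [Group Γt] [AddCommGroup A]
  {φ : Γt →* Γ} {ι : A → Γt} {s : Γ → Γt} {α : Γ → Γ → A}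
  (hext : IsCentralExtData φ ι s α)
include hext

theorem φ_ι (a : A) : φ (ι a) = 1 :=
  (hext.range_eq_ker (ι a)).mpr ⟨a, rfl⟩

theorem finite_ker [Finite A] : Finite φ.ker :=
  Finite.of_surjective (fun a : A => (⟨ι a, hext.φ_ι a⟩ : φ.ker)) fun ⟨x, hx⟩ =>
    let ⟨a, ha⟩ := (hext.range_eq_ker x).mp hx
    ⟨a, Subtype.ext ha⟩

theorem s_mul_s (g h : Γ) : s g * s h = ι (α g h) * s (g * h) := by
  rw [hext.cocycle_eq]
  group

def splitting (Λ : Subgroup Γ) (b : Λ → A) (hb : ∀ g h : Λ, α g h = b h - b (g * h) + b g) :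
    Λ →* Γt :=
  MonoidHom.mk' (fun g => ι (-b g) * s g) fun g h => by
    calc ι (-b (g * h)) * s (g * h)
        = ι (-b g) * ι (-b h) * (ι (α g h) * s (g * h)) := by
          rw [← hext.hom, ← mul_assoc, ← hext.hom, hb g h]
          congr 2
          abel
      _ = ι (-b g) * s g * (ι (-b h) * s h) := by
          rw [← hext.s_mul_s]
          simp only [mul_assoc]
          rw [← mul_assoc (s g), ← hext.central, mul_assoc]

theorem φ_splitting (Λ : Subgroup Γ) (b : Λ → A) (hb : ∀ g h : Λ, α g h = b h - b (g * h) + b g)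
    (g : Λ) : φ (hext.splitting Λ b hb g) = g := by
  simp [splitting, hext.φ_ι, hext.section_prop]

theorem resFin_of_restrict_is2Cobound [Finite A] (Λ : Subgroup Γ) [Λ.FiniteIndex]
    (hΓ : ResFin Γ) (hα : Is2Cobound (fun _ : Λ => AddMonoidHom.id A) fun g h : Λ => α g h) :
    ResFin Γt := by
  obtain ⟨b, hb⟩ := hα
  set σ := hext.splitting Λ b hb
  have : Finite φ.ker := hext.finite_ker
  have hcover : Λ.comap φ ≤ σ.range ⊔ φ.ker := fun x hx => by
    have hσx : φ (σ ⟨φ x, hx⟩) = φ x := hext.φ_splitting Λ b hb _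
    rw [← mul_inv_cancel_left (σ ⟨φ x, hx⟩) x]
    exact Subgroup.mul_mem_sup ⟨_, rfl⟩ (by simp [hσx])
  have := Subgroup.finiteIndex_comap φ Λ
  have : σ.range.FiniteIndex := Subgroup.finiteIndex_of_le_sup_of_finite hcover
  refine hΓ.of_disjoint_ker φ σ.range (Subgroup.disjoint_def.mpr ?_)
  rintro _ ⟨g, rfl⟩ hg
  rw [MonoidHom.mem_ker, hext.φ_splitting] at hg
  rw [show g = 1 from Subtype.ext hg, map_one]

end IsCentralExtData

/-- Let `Λ ≤ Γ` be of finite index, `A` a finite abelian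
group, and `α ∈ H^2(Γ, A)` the class of a central extension
`1 → A → Γ̃ → Γ → 1`.  If `Γ` is residually finite and `Γ̃` is not, then the
image `θ^{Γ/Λ}_*(α) ∈ H^2(Γ, P^{Γ/Λ}(A))` is nonzero, i.e. the pushforward of
the classifying cocycle to the coinduced module is not a coboundary. -/
theorem theta_pushforward_nonzero {Γ Γt A : Type} [Group Γ] [Group Γt]
    [AddCommGroup A] [Finite A] (Λ : Subgroup Γ) [Λ.FiniteIndex]
    (φ : Γt →* Γ) (ι : A → Γt) (s : Γ → Γt) (α : Γ → Γ → A)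
    (hext : IsCentralExtData φ ι s α)
    (hΓ : ResFin Γ) (hΓt : ¬ ResFin Γt) :
    ¬ Is2Cobound (rhoCoind Λ A)
        (fun g h => (fun _ : Γ ⧸ Λ => α g h)) :=
  fun hcob => hΓt (hext.resFin_of_restrict_is2Cobound Λ hΓ (.restrict_of_rhoCoind Λ α hcob))
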